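/- Let X be a real-valued random variable with continuous distribution function, α ∈ (0,1), and U : ℝ → ℝ increasing and continuous with U(X) integrable. Then ρ_U^α(X) ≥ ψ_U(X), i.e., the Tail Quasi-Linear Mean dominates the Quasi-Linear Mean. -/

import Mathlib

open MeasureTheory Real Set

/-- Value at Risk at level `α`: `VaR_α(X) = inf {x | F_X(x) ≥ α}`. -/
noncomputable def VaR {Ω : Type*} [MeasurableSpace Ω] (P : Measure Ω) (X : Ω → ℝ) (α : ℝ) : ℝ :=
  sInf {x : ℝ | α ≤ (P {ω | X ω ≤ x}).toReal}

/-- The cumulative distribution function of `X` under `P`. -/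
noncomputable def cdfR {Ω : Type*} [MeasurableSpace Ω] (P : Measure Ω) (X : Ω → ℝ) (x : ℝ) : ℝ :=
  (P {ω | X ω ≤ x}).toReal

/-- Conditional expectation of `f` given the event `A`: `E[f | A]`. -/
noncomputable def condExpOn {Ω : Type*} [MeasurableSpace Ω] (P : Measure Ω) (f : Ω → ℝ)
    (A : Set Ω) : ℝ :=
  (∫ ω in A, f ω ∂P) / (P A).toReal

/-- The tail event `{X ≥ VaR_α(X)}`. -/
def tailEvent {Ω : Type*} [MeasurableSpace Ω] (P : Measure Ω) (X : Ω → ℝ) (α : ℝ) : Set Ω :=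
  {ω | VaR P X α ≤ X ω}

/-- Generalized inverse `U⁻¹(y) = inf {x | U(x) ≥ y}`. -/
noncomputable def ginv (U : ℝ → ℝ) (y : ℝ) : ℝ := sInf {x : ℝ | y ≤ U x}

/-- Tail Quasi-Linear Mean `ρ_U^α(X) = U⁻¹(E[U(X) | X ≥ VaR_α(X)])`. -/
noncomputable def TQLM {Ω : Type*} [MeasurableSpace Ω] (P : Measure Ω) (X : Ω → ℝ) (α : ℝ)
    (U : ℝ → ℝ) : ℝ :=
  ginv U (condExpOn P (fun ω => U (X ω)) (tailEvent P X α))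

/-- Conditional Tail Expectation `CTE_α(X) = E[X | X ≥ VaR_α(X)]`. -/
noncomputable def CTE {Ω : Type*} [MeasurableSpace Ω] (P : Measure Ω) (X : Ω → ℝ) (α : ℝ) : ℝ :=
  condExpOn P X (tailEvent P X α)

/-- Tail Conditional Entropic Risk Measure `ρ_γ^α(X) = (1/γ) log E[e^{γX} | X ≥ VaR_α(X)]`. -/
noncomputable def TCERM {Ω : Type*} [MeasurableSpace Ω] (P : Measure Ω) (X : Ω → ℝ) (α : ℝ)
    (γ : ℝ) : ℝ :=
  (1 / γ) * Real.log (condExpOn P (fun ω => Real.exp (γ * X ω)) (tailEvent P X α))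

/-! Since `U` is monotone, `U ∘ X` is at least `U (VaR_α X)` on the tail event `{X ≥ VaR_α X}`
and at most `U (VaR_α X)` off it, so its mean over the tail event dominates its overall mean; the
tail event has probability at least `1 - α > 0`, because `P (X < VaR_α X)` is the left limit of
the distribution function at `VaR_α X`, which is at most `α`. Monotonicity of the generalized
inverse then gives the claim. -/

open ProbabilityTheory Filter Topology

section Distribution

variable {Ω : Type*} [MeasurableSpace Ω] {P : Measure Ω} [IsProbabilityMeasure P] {X : Ω → ℝ}
  {α : ℝ}

lemma cdfR_eq_cdf_map (hX : Measurable X) : cdfR P X = cdf (P.map X) := by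
  have := Measure.isProbabilityMeasure_map (μ := P) hX.aemeasurable
  ext x
  rw [cdf_eq_real, map_measureReal_apply hX measurableSet_Iic]
  rfl

lemma bddBelow_setOf_le_cdfR (hX : Measurable X) (hα : 0 < α) :
    BddBelow {x | α ≤ cdfR P X x} := by
  have := Measure.isProbabilityMeasure_map (μ := P) hX.aemeasurable
  rw [cdfR_eq_cdf_map hX]
  obtain ⟨x₀, hx₀⟩ := ((tendsto_cdf_atBot (P.map X)).eventually_lt_const hα).exists
  exact ⟨x₀, fun x hx => le_of_not_gt fun hlt => (hx.trans ((cdf _).mono hlt.le)).not_gt hx₀⟩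

lemma cdfR_lt_of_lt_VaR (hX : Measurable X) (hα : 0 < α) {x : ℝ} (hx : x < VaR P X α) :
    cdfR P X x < α :=
  lt_of_not_ge fun h => hx.not_ge (csInf_le (bddBelow_setOf_le_cdfR hX hα) h)

lemma measure_lt_VaR_le_ofReal (hX : Measurable X) (hα : 0 < α) :
    P {ω | X ω < VaR P X α} ≤ ENNReal.ofReal α := by
  have := Measure.isProbabilityMeasure_map (μ := P) hX.aemeasurable
  set F := cdf (P.map X)
  have hleft : Function.leftLim F (VaR P X α) ≤ α := by
    refine le_of_tendsto (F.mono.tendsto_leftLim _) ?_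
    filter_upwards [self_mem_nhdsWithin] with x hx
    rw [← cdfR_eq_cdf_map hX]
    exact (cdfR_lt_of_lt_VaR hX hα hx).le
  calc P {ω | X ω < VaR P X α} = F.measure (Iio (VaR P X α)) := by
        rw [measure_cdf, Measure.map_apply hX measurableSet_Iio]; rfl
    _ = ENNReal.ofReal (Function.leftLim F (VaR P X α)) := by
        rw [F.measure_Iio (tendsto_cdf_atBot _), sub_zero]
    _ ≤ ENNReal.ofReal α := ENNReal.ofReal_le_ofReal hleft

lemma measure_tailEvent_ne_zero (hX : Measurable X) (hα : α ∈ Ioo 0 1) :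
    P (tailEvent P X α) ≠ 0 := by
  have hcompl : (tailEvent P X α)ᶜ = {ω | X ω < VaR P X α} := by
    ext ω; simp [tailEvent]
  have hmeas : MeasurableSet (tailEvent P X α) := measurableSet_le measurable_const hX
  intro h
  rw [← prob_compl_eq_one_iff₀ hmeas.nullMeasurableSet, hcompl] at h
  have := h ▸ measure_lt_VaR_le_ofReal hX hα.1
  exact (ENNReal.ofReal_lt_one.2 hα.2).not_ge this

end Distribution

section Average

variable {Ω : Type*} [MeasurableSpace Ω] {μ : Measure Ω} {f : Ω → ℝ} {s : Set Ω}

lemma condExpOn_eq_setAverage (μ : Measure Ω) (f : Ω → ℝ) (s : Set Ω) :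
    condExpOn μ f s = ⨍ ω in s, f ω ∂μ := by
  rw [setAverage_eq, smul_eq_mul, condExpOn, measureReal_def, div_eq_inv_mul]

variable [IsProbabilityMeasure μ]

lemma integral_le_setAverage_of_le_of_ge (hs : MeasurableSet s) (hμs : μ s ≠ 0)
    (hf : Integrable f μ) {c : ℝ} (hge : ∀ ω ∈ s, c ≤ f ω) (hle : ∀ ω ∉ s, f ω ≤ c) :
    ∫ ω, f ω ∂μ ≤ ⨍ ω in s, f ω ∂μ := by
  have hp : 0 < μ.real s := ENNReal.toReal_pos hμs (measure_ne_top _ _)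
  have hp1 : μ.real s ≤ 1 := measureReal_le_one
  have hin : c * μ.real s ≤ ∫ ω in s, f ω ∂μ := by
    simpa [mul_comm] using setIntegral_mono_on (integrableOn_const (measure_ne_top _ _))
      hf.integrableOn hs hge
  have hout : ∫ ω in sᶜ, f ω ∂μ ≤ c * (1 - μ.real s) := by
    simpa [mul_comm, probReal_compl_eq_one_sub hs] using setIntegral_mono_on hf.integrableOn
      (integrableOn_const (measure_ne_top _ _)) hs.compl hle
  rw [setAverage_eq, smul_eq_mul, ← integral_add_compl hs hf, inv_mul_eq_div, le_div_iff₀ hp]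
  nlinarith

lemma setAverage_eq_integral_of_forall_integral_le (hμs : μ s ≠ 0) (hf : Integrable f μ)
    (h : ∀ ω, ∫ ω, f ω ∂μ ≤ f ω) : ⨍ ω in s, f ω ∂μ = ∫ ω, f ω ∂μ := by
  have hconst : f =ᵐ[μ] fun _ => ∫ ω, f ω ∂μ := by
    have hzero : (fun ω => f ω - ∫ ω, f ω ∂μ) =ᵐ[μ] 0 := by
      refine (integral_eq_zero_iff_of_nonneg (fun ω => sub_nonneg.2 (h ω))
        (hf.sub (integrable_const _))).1 ?_
      simp [integral_sub hf (integrable_const _)]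
    filter_upwards [hzero] with ω hω
    exact sub_eq_zero.1 hω
  rw [average_congr (ae_restrict_of_ae hconst), setAverage_const hμs (measure_ne_top _ _)]

end Average

lemma ginv_le_ginv_of_bddBelow {U : ℝ → ℝ} {y₁ y₂ : ℝ} (hy : y₁ ≤ y₂) (hne : ∃ x, y₂ ≤ U x)
    (hbdd : BddBelow {x | y₁ ≤ U x}) : ginv U y₁ ≤ ginv U y₂ :=
  csInf_le_csInf hbdd hne fun _ hx => hy.trans hx

lemma Monotone.forall_le_of_not_bddBelow {U : ℝ → ℝ} (hU : Monotone U) {y : ℝ}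
    (h : ¬BddBelow {x | y ≤ U x}) (x : ℝ) : y ≤ U x := by
  obtain ⟨z, hz, hzx⟩ := not_bddBelow_iff.1 h x
  exact hz.trans (hU hzx.le)

theorem QLM_le_TQLM_general
    {Ω : Type*} [MeasurableSpace Ω] (P : Measure Ω) [IsProbabilityMeasure P]
    (X : Ω → ℝ) (hX : Measurable X)
    (α : ℝ) (hα : α ∈ Set.Ioo (0:ℝ) 1)
    (U : ℝ → ℝ) (hU : Monotone U)
    (hUXint : Integrable (fun ω => U (X ω)) P) :
    ginv U (∫ ω, U (X ω) ∂P) ≤ TQLM P X α U := by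
  have hA : P (tailEvent P X α) ≠ 0 := measure_tailEvent_ne_zero hX hα
  rw [TQLM, condExpOn_eq_setAverage]
  have hmean := integral_le_setAverage_of_le_of_ge (measurableSet_le measurable_const hX) hA
    hUXint (c := U (VaR P X α)) (fun ω hω => hU hω) (fun ω hω => hU (not_le.1 hω).le)
  obtain ⟨ω, -, hω⟩ := exists_setAverage_le hA (measure_ne_top _ _) hUXint.integrableOn
  by_cases hbdd : BddBelow {x | ∫ ω, U (X ω) ∂P ≤ U x}
  · exact ginv_le_ginv_of_bddBelow hmean ⟨X ω, hω⟩ hbdd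
  · -- `ginv` is junk here, but then `U ∘ X` is a.s. constant and both means coincide.
    rw [setAverage_eq_integral_of_forall_integral_le hA hUXint
      fun ω => hU.forall_le_of_not_bddBelow hbdd (X ω)]

/-- The Tail Quasi-Linear Mean dominates the Quasi-Linear Mean
`ψ_U(X) = U⁻¹(E[U(X)])`. -/
theorem QLM_le_TQLM
    {Ω : Type*} [MeasurableSpace Ω] (P : Measure Ω) [IsProbabilityMeasure P]
    (X : Ω → ℝ) (hX : Measurable X) (hFX : Continuous (cdfR P X))
    (α : ℝ) (hα : α ∈ Set.Ioo (0:ℝ) 1)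
    (U : ℝ → ℝ) (hU : Monotone U) (hUc : Continuous U)
    (hUXint : Integrable (fun ω => U (X ω)) P) :
    ginv U (∫ ω, U (X ω) ∂P) ≤ TQLM P X α U :=
  QLM_le_TQLM_general P X hX α hα U hU hUXint
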